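/- arXiv:0906.5171 — 4 statements merged into one kernel-verified Lean document; each statement's English description precedes it below -/
import Mathlib

section
/- Let f : ℝⁿ → ℝ be a separable convex function, i.e., f(x) = ∑ᵢ fᵢ(xᵢ) with each fᵢ : ℝ → ℝ convex. If h₁, ..., h_k ∈ ℝⁿ all lie in a common orthant (i.e., for each coordinate j, the signs of (h₁)ⱼ, ..., (h_k)ⱼ are all nonnegative or all nonpositive), then for any x ∈ ℝⁿ, f(x + ∑ᵢ hᵢ) - f(x) ≥ ∑ᵢ (f(x + hᵢ) - f(x)). -/
/-!
Along a line, convexity of `g` means that the increment `g (y + d) - g y` grows with `y` when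
`d ≥ 0` (and shrinks when `d ≤ 0`). If all steps `t i` share a sign, adding them one at a time
therefore never decreases the individual increments, so in each coordinate the increment of the
sum dominates the sum of the increments. A separable function is a sum of such coordinates.
-/

open Finset Set

section Increments

variable {𝕜 : Type*} [Field 𝕜] [LinearOrder 𝕜] [IsStrictOrderedRing 𝕜] {g : 𝕜 → 𝕜}

lemma ConvexOn.map_add_sub_map_le (hg : ConvexOn 𝕜 univ g) {a b d : 𝕜} (hab : a ≤ b)
    (hd : 0 ≤ d) : g (a + d) - g a ≤ g (b + d) - g b := by
  rcases hd.eq_or_lt with rfl | hd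
  · simp
  -- compare both secants with the one from `a` to `b + d`
  have hleft : slope g a (a + d) ≤ slope g a (b + d) :=
    hg.slope_mono (mem_univ a) ⟨mem_univ _, (lt_add_of_pos_right a hd).ne'⟩
      ⟨mem_univ _, (by linarith : a < b + d).ne'⟩ (by linarith)
  have hright : slope g (b + d) a ≤ slope g (b + d) b :=
    hg.slope_mono (mem_univ _) ⟨mem_univ _, (by linarith : a < b + d).ne⟩
      ⟨mem_univ _, (lt_add_of_pos_right b hd).ne⟩ hab
  rw [slope_comm g (b + d) a, slope_comm g (b + d) b] at hright
  have hslope := hleft.trans hright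
  rw [slope_def_field, slope_def_field, add_sub_cancel_left, add_sub_cancel_left] at hslope
  exact (div_le_div_iff_of_pos_right hd).mp hslope

lemma ConvexOn.map_add_add_map_add_le (hg : ConvexOn 𝕜 univ g) (x : 𝕜) {s t : 𝕜}
    (hst : 0 ≤ s * t) : g (x + s) + g (x + t) ≤ g x + g (x + s + t) := by
  rcases mul_nonneg_iff.mp hst with ⟨hs, ht⟩ | ⟨hs, ht⟩
  · have := hg.map_add_sub_map_le (le_add_of_nonneg_right hs : x ≤ x + s) ht
    linarith
  · have := hg.map_add_sub_map_le (by linarith : x + s + t ≤ x + t) (neg_nonneg.mpr ht)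
    simp only [add_neg_cancel_right] at this
    linarith

lemma ConvexOn.sum_map_add_sub_map_le (hg : ConvexOn 𝕜 univ g) {ι : Type*} (t : ι → 𝕜)
    (ht : (∀ i, 0 ≤ t i) ∨ (∀ i, t i ≤ 0)) (x : 𝕜) (s : Finset ι) :
    ∑ i ∈ s, (g (x + t i) - g x) ≤ g (x + ∑ i ∈ s, t i) - g x := by
  classical
  induction s using Finset.induction with
  | empty => simp
  | insert a s ha ih =>
    have hsign : 0 ≤ t a * ∑ i ∈ s, t i := by
      rcases ht with hpos | hneg
      · exact mul_nonneg (hpos a) (sum_nonneg fun i _ ↦ hpos i)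
      · exact mul_nonneg_of_nonpos_of_nonpos (hneg a) (sum_nonpos fun i _ ↦ hneg i)
    have hstep := hg.map_add_add_map_add_le x hsign
    rw [sum_insert ha, sum_insert ha, ← add_assoc]
    linarith

end Increments

/-- Superadditivity of separable convex functions over a common orthant. -/
theorem separable_convex_superadditive
    (n k : ℕ) (fi : Fin n → ℝ → ℝ)
    (hconv : ∀ i, ConvexOn ℝ Set.univ (fi i))
    (f : (Fin n → ℝ) → ℝ)
    (hf : ∀ x, f x = ∑ i, fi i (x i))
    (h : Fin k → (Fin n → ℝ))
    (hsign : ∀ j : Fin n, (∀ i, 0 ≤ h i j) ∨ (∀ i, h i j ≤ 0))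
    (x : Fin n → ℝ) :
    f (x + ∑ i, h i) - f x ≥ ∑ i, (f (x + h i) - f x) := by
  simp only [hf, Pi.add_apply, Finset.sum_apply, ← Finset.sum_sub_distrib]
  rw [Finset.sum_comm]
  exact Finset.sum_le_sum fun j _ ↦
    (hconv j).sum_map_add_sub_map_le (fun i ↦ h i j) (hsign j) (x j) Finset.univ
end

section
/- Let f : [l, u] → ℝ be a convex function on a real interval [l, u] with l < u. Then the convex hull of the graph G = {(w, v) : v = f(w), w ∈ [l,u]} equals the set G̃ = {(w, v) : w ∈ [l,u], f(w) ≤ v ≤ f(l) + ((f(u)-f(l))/(u-l))·(w - l)}. -/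
/-!
The chord over `[l, u]` is the segment joining the endpoints of the graph, so each of its points
lies in the convex hull, and so does every vertical segment from the graph up to the chord.
Conversely, the region is the intersection of the epigraph of `f` with the hypograph of the affine
chord, hence convex, and it contains the graph because the chord lies in the convex epigraph.
-/

open Set

theorem mk_secant_mem_segment {a b : ℝ} (hab : a < b) (y₁ y₂ : ℝ) {x : ℝ} (hx : x ∈ Icc a b) :
    (x, y₁ + (y₂ - y₁) / (b - a) * (x - a)) ∈ segment ℝ (a, y₁) (b, y₂) := by
  have hba : b - a ≠ 0 := (sub_pos.2 hab).ne'
  refine ⟨(b - x) / (b - a), (x - a) / (b - a), div_nonneg (sub_nonneg.2 hx.2) (sub_pos.2 hab).le,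
    div_nonneg (sub_nonneg.2 hx.1) (sub_pos.2 hab).le, by field_simp; ring, ?_⟩
  ext <;> simp only [Prod.smul_mk, smul_eq_mul, Prod.mk_add_mk] <;> field_simp <;> ring

theorem concaveOn_const_add_mul_sub {s : Set ℝ} (hs : Convex ℝ s) (c m a : ℝ) :
    ConcaveOn ℝ s fun x => c + m * (x - a) :=
  ⟨hs, fun x _ y _ α β _ _ hαβ => le_of_eq <| by
    simp only [smul_eq_mul]; linear_combination (c - m * a) * hαβ⟩

theorem ConvexOn.le_secant {s : Set ℝ} {f : ℝ → ℝ} (hf : ConvexOn ℝ s f) {l u w : ℝ}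
    (hl : l ∈ s) (hu : u ∈ s) (hlu : l < u) (hw : w ∈ Icc l u) :
    f w ≤ f l + (f u - f l) / (u - l) * (w - l) :=
  (hf.convex_epigraph.segment_subset (x := (l, f l)) ⟨hl, le_rfl⟩ ⟨hu, le_rfl⟩
    (mk_secant_mem_segment hlu _ _ hw)).2

theorem ConvexOn.convex_setOf_le_le {𝕜 E β : Type*} [Semiring 𝕜] [PartialOrder 𝕜]
    [AddCommMonoid E] [AddCommMonoid β] [PartialOrder β] [IsOrderedAddMonoid β]
    [SMul 𝕜 E] [Module 𝕜 β] [PosSMulMono 𝕜 β] {s : Set E} {f g : E → β}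
    (hf : ConvexOn 𝕜 s f) (hg : ConcaveOn 𝕜 s g) :
    Convex 𝕜 {p : E × β | p.1 ∈ s ∧ f p.1 ≤ p.2 ∧ p.2 ≤ g p.1} := by
  convert hf.convex_epigraph.inter hg.convex_hypograph using 1
  ext p
  simp only [mem_ofPred_eq, mem_inter_iff]
  tauto

/-- The convex hull of the graph of a convex function on [l,u] is the region
between the graph and the secant over [l,u]. -/
theorem convexHull_graph_eq_secant_region (f : ℝ → ℝ) (l u : ℝ) (hlu : l < u)
    (hf : ConvexOn ℝ (Set.Icc l u) f) :
    convexHull ℝ {p : ℝ × ℝ | p.1 ∈ Set.Icc l u ∧ p.2 = f p.1} =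
      {p : ℝ × ℝ | p.1 ∈ Set.Icc l u ∧ f p.1 ≤ p.2 ∧
        p.2 ≤ f l + (f u - f l) / (u - l) * (p.1 - l)} := by
  set G := {p : ℝ × ℝ | p.1 ∈ Icc l u ∧ p.2 = f p.1}
  have hl : l ∈ Icc l u := left_mem_Icc.2 hlu.le
  have hu : u ∈ Icc l u := right_mem_Icc.2 hlu.le
  refine (convexHull_min ?_ ?_).antisymm ?_
  · rintro ⟨w, v⟩ ⟨hw, rfl : v = f w⟩
    exact ⟨hw, le_rfl, hf.le_secant hl hu hlu hw⟩
  · exact hf.convex_setOf_le_le (concaveOn_const_add_mul_sub (convex_Icc l u) _ _ _)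
  · rintro ⟨w, v⟩ ⟨hw, hfv, hvs⟩
    have hsecant := segment_subset_convexHull (s := G) (x := (l, f l)) (y := (u, f u))
      ⟨hl, rfl⟩ ⟨hu, rfl⟩ (mk_secant_mem_segment hlu _ _ hw)
    have hgraph : (w, f w) ∈ convexHull ℝ G := subset_convexHull ℝ G ⟨hw, rfl⟩
    refine (convex_convexHull ℝ G).segment_subset hgraph hsecant ?_
    rw [← Prod.image_mk_segment_right, segment_eq_Icc (hfv.trans hvs)]
    exact ⟨v, ⟨hfv, hvs⟩, rfl⟩
end

section
/- Let p₁,...,p_m : ℤⁿ → ℤ be integer-valued functions on [l,u] ∩ ℤⁿ (l, u ∈ ℤⁿ, l ≤ u) and suppose each pᵢ satisfies: for all nonnegative reals λ_k (k ranging over [l,u] ∩ ℤⁿ) with ∑_k λ_k = 1 and ∑_k λ_k·k ∈ ℤⁿ, we have pᵢ(∑_k λ_k·k) - ∑_k λ_k·pᵢ(k) < 1. Then K_I := {x ∈ ℤⁿ : pᵢ(x) ≤ 0 ∀i, l ≤ x ≤ u} equals the set of integer points in the projection to x of P_p ∩ {(x,π) : π ≤ 0}, where P_p = conv{(x, p₁(x),...,p_m(x))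 : x ∈ [l,u] ∩ ℤⁿ}. -/
/-!
A point `(z, π)` of `P_p` is a convex combination `∑ λ_k (k, p(k))` of the lifted box points, so
`z` stays in the box and `π = ∑ λ_k p(k)`. The hypothesis then gives `pᵢ(z) < πᵢ + 1 ≤ 1`, and
integrality turns this into `pᵢ(z) ≤ 0`.
-/

open Finset

theorem exists_nonneg_weights_of_mem_convexHull_image {R E ι : Type*} [Field R] [LinearOrder R]
    [IsStrictOrderedRing R] [AddCommGroup E] [Module R E] {s : Finset ι} {f : ι → E}
    (hf : Set.InjOn f s) {x : E} (hx : x ∈ convexHull R (f '' s)) :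
    ∃ w : ι → R, (∀ i, 0 ≤ w i) ∧ ∑ i ∈ s, w i = 1 ∧ ∑ i ∈ s, w i • f i = x := by
  classical
  rw [← coe_image] at hx
  obtain ⟨w, hw₀, hw₁, hwx⟩ := Finset.mem_convexHull'.1 hx
  rw [sum_image hf] at hw₁ hwx
  refine ⟨fun i => if i ∈ s then w (f i) else 0, fun i => ?_, ?_, ?_⟩
  · dsimp only
    split_ifs with hi
    exacts [hw₀ _ (mem_image_of_mem f hi), le_rfl]
  · rwa [sum_congr rfl fun i hi => if_pos hi]
  · rw [← hwx]
    exact sum_congr rfl fun i hi => by simp only [if_pos hi]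

theorem mem_Icc_of_cast_eq_sum_mul {ι : Type*} {s : Finset (ι → ℤ)} {l u z : ι → ℤ}
    (hs : ∀ k ∈ s, k ∈ Set.Icc l u) {lam : (ι → ℤ) → ℝ} (hlam₀ : ∀ k, 0 ≤ lam k)
    (hlam₁ : ∑ k ∈ s, lam k = 1) (hz : ∀ j, (z j : ℝ) = ∑ k ∈ s, lam k * (k j : ℝ)) :
    z ∈ Set.Icc l u := by
  have hzj : ∀ j, (z j : ℝ) ∈ Set.Icc (l j : ℝ) (u j) := fun j => by
    rw [hz j]
    refine (convex_Icc _ _).sum_mem (fun k _ => hlam₀ k) hlam₁ fun k hk => ?_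
    exact ⟨by exact_mod_cast (hs k hk).1 j, by exact_mod_cast (hs k hk).2 j⟩
  exact ⟨fun j => by exact_mod_cast (hzj j).1, fun j => by exact_mod_cast (hzj j).2⟩

theorem KI_eq_integer_points_of_projection_general (n m : ℕ)
    (p : Fin m → (Fin n → ℤ) → ℤ) (l u : Fin n → ℤ)
    (hcond : ∀ i : Fin m, ∀ lam : (Fin n → ℤ) → ℝ,
      (∀ k, 0 ≤ lam k) → (∑ k ∈ Finset.Icc l u, lam k) = 1 →
      ∀ z : Fin n → ℤ,
        (∀ j, (z j : ℝ) = ∑ k ∈ Finset.Icc l u, lam k * (k j : ℝ)) →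
        ((p i z : ℝ) - ∑ k ∈ Finset.Icc l u, lam k * (p i k : ℝ)) < 1) :
    ∀ z : Fin n → ℤ,
      (l ≤ z ∧ z ≤ u ∧ ∀ i, p i z ≤ 0) ↔
      (∃ π : Fin m → ℝ,
        (((fun j => (z j : ℝ)), π) ∈ convexHull ℝ
          {q : (Fin n → ℝ) × (Fin m → ℝ) | ∃ w : Fin n → ℤ, l ≤ w ∧ w ≤ u ∧
            q.1 = (fun j => (w j : ℝ)) ∧ q.2 = fun i => (p i w : ℝ)}) ∧
        ∀ i, π i ≤ 0) := by
  set g : (Fin n → ℤ) → (Fin n → ℝ) × (Fin m → ℝ) :=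
    fun w => (fun j => (w j : ℝ), fun i => (p i w : ℝ))
  have hS : {q : (Fin n → ℝ) × (Fin m → ℝ) | ∃ w : Fin n → ℤ, l ≤ w ∧ w ≤ u ∧
      q.1 = (fun j => (w j : ℝ)) ∧ q.2 = fun i => (p i w : ℝ)} = g '' ↑(Icc l u) := by
    ext ⟨x, π⟩
    simp [g, Prod.ext_iff, and_assoc, eq_comm]
  have hg : Set.InjOn g ↑(Icc l u) := fun a _ b _ hab =>
    funext fun j => Int.cast_injective (α := ℝ) (congrFun (congrArg Prod.fst hab) j)
  intro z
  rw [hS]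
  constructor
  · rintro ⟨hlz, hzu, hp⟩
    exact ⟨_, subset_convexHull ℝ _ ⟨z, mem_Icc.2 ⟨hlz, hzu⟩, rfl⟩,
      fun i => by exact_mod_cast hp i⟩
  rintro ⟨π, hmem, hπ⟩
  obtain ⟨lam, hlam₀, hlam₁, hlamz⟩ := exists_nonneg_weights_of_mem_convexHull_image hg hmem
  have hz : ∀ j, (z j : ℝ) = ∑ k ∈ Icc l u, lam k * (k j : ℝ) := fun j => by
    simpa [g, Prod.fst_sum] using (congrFun (congrArg Prod.fst hlamz) j).symm
  have hπp : ∀ i, π i = ∑ k ∈ Icc l u, lam k * (p i k : ℝ) := fun i => by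
    simpa [g, Prod.snd_sum] using (congrFun (congrArg Prod.snd hlamz) i).symm
  obtain ⟨hlz, hzu⟩ :=
    mem_Icc_of_cast_eq_sum_mul (fun k hk => mem_Icc.1 hk) hlam₀ hlam₁ hz
  refine ⟨hlz, hzu, fun i => ?_⟩
  have hlt : (p i z : ℝ) < 1 := by
    linarith [hcond i lam hlam₀ hlam₁ z hz, hπp i, hπ i]
  exact Int.lt_add_one_iff.1 (by exact_mod_cast hlt)

/-- If each pᵢ satisfies the superadditivity-type condition (Eq. (iff-condition)),
then K_I equals the set of integer points of the x-projection of P_p ∩ {π ≤ 0}. -/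
theorem KI_eq_integer_points_of_projection (n m : ℕ)
    (p : Fin m → (Fin n → ℤ) → ℤ) (l u : Fin n → ℤ) (hlu : l ≤ u)
    (hcond : ∀ i : Fin m, ∀ lam : (Fin n → ℤ) → ℝ,
      (∀ k, 0 ≤ lam k) → (∑ k ∈ Finset.Icc l u, lam k) = 1 →
      ∀ z : Fin n → ℤ,
        (∀ j, (z j : ℝ) = ∑ k ∈ Finset.Icc l u, lam k * (k j : ℝ)) →
        ((p i z : ℝ) - ∑ k ∈ Finset.Icc l u, lam k * (p i k : ℝ)) < 1) :
    ∀ z : Fin n → ℤ,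
      (l ≤ z ∧ z ≤ u ∧ ∀ i, p i z ≤ 0) ↔
      (∃ π : Fin m → ℝ,
        (((fun j => (z j : ℝ)), π) ∈ convexHull ℝ
          {q : (Fin n → ℝ) × (Fin m → ℝ) | ∃ w : Fin n → ℤ, l ≤ w ∧ w ≤ u ∧
            q.1 = (fun j => (w j : ℝ)) ∧ q.2 = fun i => (p i w : ℝ)}) ∧
        ∀ i, π i ≤ 0) :=
  KI_eq_integer_points_of_projection_general n m p l u hcond
end

section
/- Let S₁ = {(x, y, z) ∈ ℝ² × {0,1} : y ≥ x², uz ≥ x ≥ lz, x ≥ 0} for real constants u ≥ l ≥ 0 with u > 0. Then S₁ is contained in the convex set S₁ᶜ = {(x, y, z) ∈ ℝ³ : yz ≥ x², uz ≥ x ≥ lz, 0 ≤ z ≤ 1, x ≥ 0, y ≥ 0}, and S₁ᶜ is a convex subset of ℝ³. -/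
/-!
S₁ᶜ is the rotated cone `x² ≤ yz, y, z ≥ 0` cut by half-spaces. The cone is convex because, for
two of its points, the cross term `2xx'` of the square of a convex combination is bounded by
`yz' + y'z`: its square is at most `4 (yz')(y'z)`, and AM-GM finishes. Points of S₁ lie in S₁ᶜ
since `z ∈ {0, 1}` forces `x = 0` or `yz = y`.
-/

section RotatedCone

variable {𝕜 : Type*} [CommRing 𝕜] [LinearOrder 𝕜] [IsStrictOrderedRing 𝕜]

theorem two_mul_mul_le_of_sq_le_mul {x y z x' y' z' : 𝕜} (hy : 0 ≤ y) (hz : 0 ≤ z)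
    (hy' : 0 ≤ y') (hz' : 0 ≤ z') (h : x ^ 2 ≤ y * z) (h' : x' ^ 2 ≤ y' * z') :
    2 * (x * x') ≤ y * z' + y' * z := by
  have hprod : (2 * (x * x')) ^ 2 ≤ 4 * ((y * z') * (y' * z)) := by
    have := mul_le_mul h h' (sq_nonneg x') (mul_nonneg hy hz)
    linear_combination 4 * this
  have hamgm : 4 * ((y * z') * (y' * z)) ≤ (y * z' + y' * z) ^ 2 := by
    linear_combination sq_nonneg (y * z' - y' * z)
  exact (abs_le_of_sq_le_sq' (hprod.trans hamgm) (by positivity)).2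

theorem sq_add_le_mul_of_sq_le_mul {x y z x' y' z' a b : 𝕜} (hy : 0 ≤ y) (hz : 0 ≤ z)
    (hy' : 0 ≤ y') (hz' : 0 ≤ z') (h : x ^ 2 ≤ y * z) (h' : x' ^ 2 ≤ y' * z')
    (ha : 0 ≤ a) (hb : 0 ≤ b) :
    (a * x + b * x') ^ 2 ≤ (a * y + b * y') * (a * z + b * z') := by
  have hcross := mul_le_mul_of_nonneg_left
    (two_mul_mul_le_of_sq_le_mul hy hz hy' hz' h h') (mul_nonneg ha hb)
  have ha2 := mul_le_mul_of_nonneg_left h (sq_nonneg a)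
  have hb2 := mul_le_mul_of_nonneg_left h' (sq_nonneg b)
  linear_combination hcross + ha2 + hb2

def rotatedCone : Set (𝕜 × 𝕜 × 𝕜) := {p | p.1 ^ 2 ≤ p.2.1 * p.2.2 ∧ 0 ≤ p.2.1 ∧ 0 ≤ p.2.2}

theorem convex_rotatedCone : Convex 𝕜 (rotatedCone : Set (𝕜 × 𝕜 × 𝕜)) := by
  rintro ⟨x, y, z⟩ ⟨h, hy, hz⟩ ⟨x', y', z'⟩ ⟨h', hy', hz'⟩ a b ha hb -
  exact ⟨sq_add_le_mul_of_sq_le_mul hy hz hy' hz' h h' ha hb,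
    by simp only [Prod.smul_mk, Prod.mk_add_mk, smul_eq_mul]; positivity,
    by simp only [Prod.smul_mk, Prod.mk_add_mk, smul_eq_mul]; positivity⟩

end RotatedCone

theorem S1_subset_S1c_and_convex_general (l u : ℝ) :
    ({p : ℝ × ℝ × ℝ | p.2.1 ≥ p.1 ^ 2 ∧ (p.2.2 = 0 ∨ p.2.2 = 1) ∧
        u * p.2.2 ≥ p.1 ∧ p.1 ≥ l * p.2.2 ∧ 0 ≤ p.1} ⊆
      {p : ℝ × ℝ × ℝ | p.2.1 * p.2.2 ≥ p.1 ^ 2 ∧ u * p.2.2 ≥ p.1 ∧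
        p.1 ≥ l * p.2.2 ∧ 0 ≤ p.2.2 ∧ p.2.2 ≤ 1 ∧ 0 ≤ p.1 ∧ 0 ≤ p.2.1}) ∧
    Convex ℝ {p : ℝ × ℝ × ℝ | p.2.1 * p.2.2 ≥ p.1 ^ 2 ∧ u * p.2.2 ≥ p.1 ∧
        p.1 ≥ l * p.2.2 ∧ 0 ≤ p.2.2 ∧ p.2.2 ≤ 1 ∧ 0 ≤ p.1 ∧ 0 ≤ p.2.1} := by
  refine ⟨?_, ?_⟩
  · rintro ⟨x, y, z⟩ ⟨hy, rfl | rfl, hux, hlx, hx⟩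
    · have hx0 : x = 0 := le_antisymm (by simpa using hux) hx
      subst hx0
      exact ⟨by simp, hux, hlx, le_rfl, zero_le_one, le_rfl, by simpa using hy⟩
    · exact ⟨by simpa using hy, hux, hlx, zero_le_one, le_rfl, hx, (sq_nonneg x).trans hy⟩
  · rintro ⟨x, y, z⟩ ⟨h, hux, hlx, hz, hz1, hx, hy⟩
      ⟨x', y', z'⟩ ⟨h', hux', hlx', hz', hz1', hx', hy'⟩ a b ha hb hab
    have hcone := convex_rotatedCone (𝕜 := ℝ) ⟨h, hy, hz⟩ ⟨h', hy', hz'⟩ ha hb hab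
    simp only [Prod.smul_mk, Prod.mk_add_mk, smul_eq_mul] at hcone ⊢
    refine ⟨hcone.1, ?_, ?_, hcone.2.2, ?_, by positivity, hcone.2.1⟩ <;> nlinarith

/-- The mixed 0/1 set S₁ is contained in the convex set S₁ᶜ, and S₁ᶜ is convex. -/
theorem S1_subset_S1c_and_convex (l u : ℝ) (hl : 0 ≤ l) (hlu : l ≤ u) (hu : 0 < u) :
    ({p : ℝ × ℝ × ℝ | p.2.1 ≥ p.1 ^ 2 ∧ (p.2.2 = 0 ∨ p.2.2 = 1) ∧
        u * p.2.2 ≥ p.1 ∧ p.1 ≥ l * p.2.2 ∧ 0 ≤ p.1} ⊆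
      {p : ℝ × ℝ × ℝ | p.2.1 * p.2.2 ≥ p.1 ^ 2 ∧ u * p.2.2 ≥ p.1 ∧
        p.1 ≥ l * p.2.2 ∧ 0 ≤ p.2.2 ∧ p.2.2 ≤ 1 ∧ 0 ≤ p.1 ∧ 0 ≤ p.2.1}) ∧
    Convex ℝ {p : ℝ × ℝ × ℝ | p.2.1 * p.2.2 ≥ p.1 ^ 2 ∧ u * p.2.2 ≥ p.1 ∧
        p.1 ≥ l * p.2.2 ∧ 0 ≤ p.2.2 ∧ p.2.2 ≤ 1 ∧ 0 ≤ p.1 ∧ 0 ≤ p.2.1} :=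
  S1_subset_S1c_and_convex_general l u
end
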